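/- Let $r_\alpha : (0,M] \to \mathbb{R}$ for $\alpha > 0$ satisfy both (a) $\sup_{\lambda \in (0,M]} \lambda\, |r_\alpha(\lambda)| \le \gamma \alpha$ and (b) $\sup_{\lambda \in (0, e^{-2\mu - 1})} |r_\alpha(\lambda)| \varphi_{2\mu}(\lambda) \le \gamma' \varphi_{2\mu}(\alpha)$ with $\varphi_{2\mu}(\lambda) = \log^{-2\mu}(1/\lambda)$, for constants $\gamma, \gamma' > 0$, where also $r_\alpha(\lambda) \ge 0$. Then $\sup_{\lambda \in (0, e^{-2\mu-1})} \sqrt{\lambda}\, |r_\alpha(\lambda)|\, \log^{-\mu}(1/\lambda) \le \sqrt{\gamma \gamma'}\, \sqrt{\alpha}\, \log^{-\mu}(1/\alpha)$ for all sufficiently small $\alpha$ (specifically for $0 < \alpha < e^{-2\mu-1}$). -/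
import Mathlib


theorem stmt12 (M μ γ γ' : ℝ) (hμ : 0 < μ) (hγ : 0 < γ) (hγ' : 0 < γ')
    (hM : Real.exp (-(2 * μ) - 1) ≤ M)
    (r : ℝ → ℝ → ℝ) (hrnn : ∀ α lam : ℝ, 0 ≤ r α lam)
    (ha : ∀ α : ℝ, 0 < α → ∀ lam ∈ Set.Ioc (0:ℝ) M, lam * |r α lam| ≤ γ * α)
    (hb : ∀ α ∈ Set.Ioo (0:ℝ) (Real.exp (-(2 * μ) - 1)),
      ∀ lam ∈ Set.Ioo (0:ℝ) (Real.exp (-(2 * μ) - 1)),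
        |r α lam| * (Real.log (1 / lam)) ^ (-(2 * μ)) ≤ γ' * (Real.log (1 / α)) ^ (-(2 * μ))) :
    ∀ α ∈ Set.Ioo (0:ℝ) (Real.exp (-(2 * μ) - 1)),
      ∀ lam ∈ Set.Ioo (0:ℝ) (Real.exp (-(2 * μ) - 1)),
        Real.sqrt lam * |r α lam| * (Real.log (1 / lam)) ^ (-μ) ≤
          Real.sqrt (γ * γ') * Real.sqrt α * (Real.log (1 / α)) ^ (-μ) := by
  intro α hα lam hlam
  obtain ⟨hα0, hα1⟩ := hα
  obtain ⟨hlam0, hlam1⟩ := hlam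
  have hexp1 : Real.exp (-(2 * μ) - 1) < 1 := by
    exact Real.exp_lt_one_iff.2 (by linarith)
  have hloglam : 0 < Real.log (1 / lam) := by
    rw [one_div, Real.log_inv]
    have := Real.log_neg hlam0 (lt_trans hlam1 hexp1)
    linarith
  have hlogα : 0 < Real.log (1 / α) := by
    rw [one_div, Real.log_inv]
    have := Real.log_neg hα0 (lt_trans hα1 hexp1)
    linarith
  set L := Real.sqrt lam * |r α lam| * (Real.log (1 / lam)) ^ (-μ) with hL
  set R := Real.sqrt (γ * γ') * Real.sqrt α * (Real.log (1 / α)) ^ (-μ) with hR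
  have hLnn : 0 ≤ L := by positivity
  have hRnn : 0 ≤ R := by positivity
  have hsq : L ^ 2 ≤ R ^ 2 := by
    have h1 : lam * |r α lam| ≤ γ * α :=
      ha α hα0 lam ⟨hlam0, le_trans (le_of_lt hlam1) hM⟩
    have h2 := hb α ⟨hα0, hα1⟩ lam ⟨hlam0, hlam1⟩
    have e1 : ((Real.log (1 / lam)) ^ (-μ)) ^ 2 = (Real.log (1 / lam)) ^ (-(2 * μ)) := by
      rw [← Real.rpow_natCast ((Real.log (1 / lam)) ^ (-μ)) 2, ← Real.rpow_mul hloglam.le]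
      ring_nf
    have e2 : ((Real.log (1 / α)) ^ (-μ)) ^ 2 = (Real.log (1 / α)) ^ (-(2 * μ)) := by
      rw [← Real.rpow_natCast ((Real.log (1 / α)) ^ (-μ)) 2, ← Real.rpow_mul hlogα.le]
      ring_nf
    have hLsq : L ^ 2 = (lam * |r α lam|) * (|r α lam| * (Real.log (1 / lam)) ^ (-(2 * μ))) := by
      rw [hL]
      rw [mul_pow, mul_pow, e1, Real.sq_sqrt hlam0.le]
      ring
    have hRsq : R ^ 2 = (γ * α) * (γ' * (Real.log (1 / α)) ^ (-(2 * μ))) := by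
      rw [hR, mul_pow, mul_pow, e2, Real.sq_sqrt hα0.le,
        Real.sq_sqrt (by positivity : (0:ℝ) ≤ γ * γ')]
      ring
    rw [hLsq, hRsq]
    have hrnn' : 0 ≤ |r α lam| * (Real.log (1 / lam)) ^ (-(2 * μ)) := by positivity
    have : 0 ≤ lam * |r α lam| := by positivity
    exact mul_le_mul h1 h2 hrnn' (by positivity)
  calc L = Real.sqrt (L ^ 2) := (Real.sqrt_sq hLnn).symm
    _ ≤ Real.sqrt (R ^ 2) := Real.sqrt_le_sqrt hsq
    _ = R := Real.sqrt_sq hRnn
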